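/- arXiv:1611.02327 — 2 statements merged into one kernel-verified Lean document; each statement's English description precedes it below -/
import Mathlib

section
/- Let T : X ⇉ X* be a pseudomonotone operator. Then T is D-maximal pseudomonotone if, and only if, T̂ = (T̂)^ρ_D, where (T̂)^ρ_D is the restriction of the pseudomonotone polar of T̂ to dom(T). -/
open NormedSpace

section PseudoDefs

variable {X : Type*} [NormedAddCommGroup X] [NormedSpace ℝ X]

/-- `(x,x*) ∼_p (y,y*)`: the pseudomonotone relation. -/
def PseudoRel (p q : X × StrongDual ℝ X) : Prop :=
  min (q.2 (p.1 - q.1)) (p.2 (q.1 - p.1)) < 0 ∨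
    (q.2 (p.1 - q.1) = 0 ∧ p.2 (q.1 - p.1) = 0)

/-- An operator (identified with its graph) is pseudomonotone if any two of its
elements are pseudomonotonically related. -/
def Pseudomonotone (T : Set (X × StrongDual ℝ X)) : Prop :=
  ∀ p ∈ T, ∀ q ∈ T, PseudoRel p q

/-- The pseudomonotone polar `T^ρ`. -/
def pPolar (T : Set (X × StrongDual ℝ X)) : Set (X × StrongDual ℝ X) :=
  {p | ∀ q ∈ T, PseudoRel p q}

/-- The monotone polar `T^μ`. -/
def mPolar (T : Set (X × StrongDual ℝ X)) : Set (X × StrongDual ℝ X) :=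
  {p | ∀ q ∈ T, 0 ≤ (p.2 - q.2) (p.1 - q.1)}

/-- A monotone operator. -/
def MonotoneOp (T : Set (X × StrongDual ℝ X)) : Prop :=
  ∀ p ∈ T, ∀ q ∈ T, 0 ≤ (p.2 - q.2) (p.1 - q.1)

/-- The image `T(x)` of an operator at a point. -/
def img (T : Set (X × StrongDual ℝ X)) (x : X) : Set (StrongDual ℝ X) :=
  {x' | (x, x') ∈ T}

/-- The domain of an operator. -/
def opDom (T : Set (X × StrongDual ℝ X)) : Set X :=
  {x | (img T x).Nonempty}

/-- The set of zeros `Z_T` of an operator. -/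
def zeros (T : Set (X × StrongDual ℝ X)) : Set X :=
  {x | (x, (0 : StrongDual ℝ X)) ∈ T}

/-- The strict conic hull `cone_∘(A)` of a subset of the dual. -/
def coneS (A : Set (StrongDual ℝ X)) : Set (StrongDual ℝ X) :=
  {v | ∃ t : ℝ, 0 < t ∧ ∃ a ∈ A, v = t • a}

/-- The conic hull `cone(A)` of a subset of the dual. -/
def coneH (A : Set (StrongDual ℝ X)) : Set (StrongDual ℝ X) :=
  {v | ∃ t : ℝ, 0 ≤ t ∧ ∃ a ∈ A, v = t • a}

/-- The operator `cone_∘(T)`, with `(cone_∘(T))(x) = cone_∘(T(x))`. -/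
def coneOp (T : Set (X × StrongDual ℝ X)) : Set (X × StrongDual ℝ X) :=
  {p | p.2 ∈ coneS (img T p.1)}

/-- The normal cone `N_C(x)`. -/
def normalCone (C : Set X) (x : X) : Set (StrongDual ℝ X) :=
  {x' | ∀ y ∈ C, x' (y - x) ≤ 0}

/-- The strict normal cone `N°_C(x)`. -/
def strictNormalCone (C : Set X) (x : X) : Set (StrongDual ℝ X) :=
  {x' | ∀ y ∈ C, x' (y - x) < 0}

/-- `V_T(x) = {y : ∃ y* ∈ T(y), ⟨x - y, y*⟩ > 0}`. -/
def Vset (T : Set (X × StrongDual ℝ X)) (x : X) : Set X :=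
  {y | ∃ y' ∈ img T y, 0 < y' (x - y)}

/-- `W_T(x) = {y : ∃ y* ∈ T(y), ⟨x - y, y*⟩ = 0}`. -/
def Wset (T : Set (X × StrongDual ℝ X)) (x : X) : Set X :=
  {y | ∃ y' ∈ img T y, y' (x - y) = 0}

/-- Maximal pseudomonotonicity. -/
def MaxPseudomonotone (T : Set (X × StrongDual ℝ X)) : Prop :=
  Pseudomonotone T ∧ ∀ S : Set (X × StrongDual ℝ X), T ⊆ S → Pseudomonotone S → T = S

/-- Pre-maximal pseudomonotonicity: both `T` and `T^ρ` are pseudomonotone. -/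
def PreMaxPseudomonotone (T : Set (X × StrongDual ℝ X)) : Prop :=
  Pseudomonotone T ∧ Pseudomonotone (pPolar T)

/-- The restriction `T|_A` of an operator to a set `A`. -/
def restrictOp (T : Set (X × StrongDual ℝ X)) (A : Set X) : Set (X × StrongDual ℝ X) :=
  {p ∈ T | p.1 ∈ A}

/-- `L(T,x) = {y : ∃ y* ∈ T(y), ⟨x - y, y*⟩ ≥ 0}`. -/
def Lset (T : Set (X × StrongDual ℝ X)) (x : X) : Set X :=
  {y | ∃ y' ∈ img T y, 0 ≤ y' (x - y)}

/-- The operator `T̂ `: `T̂(x) = N_{L(T,x)}(x)` on `Z_T`, `cone_∘(T(x))` on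
`dom(T) \ Z_T`, and `∅` outside `dom(T)`. -/
def hatOp (T : Set (X × StrongDual ℝ X)) : Set (X × StrongDual ℝ X) :=
  {p | (p.1 ∈ zeros T ∧ p.2 ∈ normalCone (Lset T p.1) p.1) ∨
       (p.1 ∈ opDom T ∧ p.1 ∉ zeros T ∧ p.2 ∈ coneS (img T p.1))}

/-- Two operators are equivalent: same domain, same zeros, and the same conic
hulls of images outside the set of zeros. -/
def EquivOp (T S : Set (X × StrongDual ℝ X)) : Prop :=
  opDom T = opDom S ∧ zeros T = zeros S ∧
    ∀ x ∈ opDom T \ zeros T, coneH (img T x) = coneH (img S x)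

/-- `D`-maximal pseudomonotonicity (Hadjisavvas): `T` is pseudomonotone and some
equivalent pseudomonotone operator has no proper pseudomonotone extension with
the same domain. -/
def DMaxPseudomonotone (T : Set (X × StrongDual ℝ X)) : Prop :=
  Pseudomonotone T ∧ ∃ S : Set (X × StrongDual ℝ X), EquivOp T S ∧ Pseudomonotone S ∧
    ∀ S' : Set (X × StrongDual ℝ X), S ⊆ S' → Pseudomonotone S' → opDom S' = opDom S → S' = S

/-- The solution set of the Stampacchia variational inequality problem. -/
def SVIsol (T : Set (X × StrongDual ℝ X)) (K : Set X) : Set X :=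
  {x ∈ K | ∃ x' ∈ img T x, ∀ y ∈ K, 0 ≤ x' (y - x)}

/-- The solution set of the Minty variational inequality problem. -/
def MVIsol (T : Set (X × StrongDual ℝ X)) (K : Set X) : Set X :=
  {x ∈ K | ∀ q ∈ T, q.1 ∈ K → q.2 (x - q.1) ≤ 0}

/-- The linear perturbation `T + α*`. -/
def pertOp (T : Set (X × StrongDual ℝ X)) (α : StrongDual ℝ X) : Set (X × StrongDual ℝ X) :=
  {p | ∃ q ∈ T, p = (q.1, q.2 + α)}

end PseudoDefs

/-!
`T̂` is pseudomonotone, equivalent to `T`, and depends only on the equivalence class of `T`;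
moreover every pseudomonotone `S` satisfies `S ⊆ Ŝ` and `dom Ŝ = dom S`. Hence a representative
`S` of the class of `T` with no proper pseudomonotone extension on its domain equals `Ŝ = T̂`,
and conversely `T̂` is such a representative as soon as it has no such extension. A
pseudomonotone `S` has no proper pseudomonotone extension on its domain exactly when
`S = S^ρ|_{dom S}`, because any `p ∈ S^ρ` with `p.1 ∈ dom S` can be added to `S`.
-/

section DMaximality

variable {X : Type*} [NormedAddCommGroup X] [NormedSpace ℝ X]

def IsMaximalOnDomain (S : Set (X × StrongDual ℝ X)) : Prop :=
  ∀ S' : Set (X × StrongDual ℝ X), S ⊆ S' → Pseudomonotone S' → opDom S' = opDom S → S' = S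

theorem pseudoRel_iff {p q : X × StrongDual ℝ X} :
    PseudoRel p q ↔ (0 ≤ q.2 (p.1 - q.1) → p.2 (q.1 - p.1) ≤ 0) ∧
      (0 ≤ p.2 (q.1 - p.1) → q.2 (p.1 - q.1) ≤ 0) := by
  unfold PseudoRel
  constructor
  · rintro (h | ⟨h₁, h₂⟩)
    · rcases min_lt_iff.mp h with h | h <;> constructor <;> intro <;> linarith
    · exact ⟨fun _ ↦ h₂.le, fun _ ↦ h₁.le⟩
  · rintro ⟨h₁, h₂⟩
    rcases lt_or_ge (q.2 (p.1 - q.1)) 0 with ha | ha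
    · exact Or.inl (min_lt_iff.mpr (Or.inl ha))
    rcases (h₁ ha).lt_or_eq with hb | hb
    · exact Or.inl (min_lt_iff.mpr (Or.inr hb))
    · exact Or.inr ⟨le_antisymm (h₂ hb.ge) ha, hb⟩

namespace PseudoRel

theorem of_nonpos {p q : X × StrongDual ℝ X} (hq : q.2 (p.1 - q.1) ≤ 0)
    (hp : p.2 (q.1 - p.1) ≤ 0) : PseudoRel p q :=
  pseudoRel_iff.2 ⟨fun _ ↦ hp, fun _ ↦ hq⟩

theorem refl (p : X × StrongDual ℝ X) : PseudoRel p p :=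
  of_nonpos (by simp) (by simp)

theorem symm {p q : X × StrongDual ℝ X} (h : PseudoRel p q) : PseudoRel q p :=
  pseudoRel_iff.2 (pseudoRel_iff.1 h).symm

theorem apply_nonpos {p q : X × StrongDual ℝ X} (h : PseudoRel p q)
    (hq : 0 ≤ q.2 (p.1 - q.1)) : p.2 (q.1 - p.1) ≤ 0 :=
  (pseudoRel_iff.1 h).1 hq

theorem smul_right {p : X × StrongDual ℝ X} {y : X} {b : StrongDual ℝ X} {t : ℝ}
    (h : PseudoRel p (y, b)) (ht : 0 < t) : PseudoRel p (y, t • b) := by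
  have hnonneg : 0 ≤ t * b (p.1 - y) ↔ 0 ≤ b (p.1 - y) := mul_nonneg_iff_of_pos_left ht
  have hnonpos : t * b (p.1 - y) ≤ 0 ↔ b (p.1 - y) ≤ 0 := by
    rw [← neg_nonneg, ← mul_neg, mul_nonneg_iff_of_pos_left ht, neg_nonneg]
  rw [pseudoRel_iff] at h ⊢
  simpa only [smul_apply, smul_eq_mul, hnonneg, hnonpos] using h

theorem smul {x y : X} {a b : StrongDual ℝ X} {s t : ℝ} (h : PseudoRel (x, a) (y, b))
    (hs : 0 < s) (ht : 0 < t) : PseudoRel (x, s • a) (y, t • b) :=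
  ((h.smul_right ht).symm.smul_right hs).symm

end PseudoRel

variable {T S : Set (X × StrongDual ℝ X)}

theorem zeros_subset_opDom : zeros T ⊆ opDom T :=
  fun _ hx ↦ ⟨0, hx⟩

theorem zeros_subset_Lset (x : X) : zeros T ⊆ Lset T x :=
  fun _ hy ↦ ⟨0, hy, le_rfl⟩

theorem zero_mem_normalCone (C : Set X) (x : X) : (0 : StrongDual ℝ X) ∈ normalCone C x :=
  fun _ _ ↦ le_rfl

theorem Pseudomonotone.apply_nonpos_of_mem_zeros (hT : Pseudomonotone T) {x y : X}
    (hx : x ∈ zeros T) {b : StrongDual ℝ X} (hb : b ∈ img T y) : b (x - y) ≤ 0 :=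
  (hT (y, b) hb (x, 0) hx).apply_nonpos le_rfl

theorem Pseudomonotone.mem_pPolar_of_mem_normalCone (hT : Pseudomonotone T) {x : X}
    (hx : x ∈ zeros T) {v : StrongDual ℝ X} (hv : v ∈ normalCone (Lset T x) x) :
    (x, v) ∈ pPolar T := by
  intro q hq
  have hqx : q.2 (x - q.1) ≤ 0 := hT.apply_nonpos_of_mem_zeros hx hq
  exact pseudoRel_iff.2 ⟨fun h ↦ hv q.1 ⟨q.2, hq, h⟩, fun _ ↦ hqx⟩

theorem mem_coneS_of_mem_coneH {A : Set (StrongDual ℝ X)} {v : StrongDual ℝ X}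
    (hv : v ∈ coneH A) (hv₀ : v ≠ 0) : v ∈ coneS A := by
  obtain ⟨t, ht, a, ha, rfl⟩ := hv
  refine ⟨t, ht.lt_of_ne ?_, a, ha, rfl⟩
  rintro rfl
  exact hv₀ (zero_smul ℝ a)

theorem coneS_subset_coneS {A B : Set (StrongDual ℝ X)} (h : A ⊆ coneS B) :
    coneS A ⊆ coneS B := by
  rintro _ ⟨t, ht, a, ha, rfl⟩
  obtain ⟨s, hs, b, hb, rfl⟩ := h ha
  exact ⟨t * s, mul_pos ht hs, b, hb, smul_smul t s b⟩

theorem coneH_coneS {A : Set (StrongDual ℝ X)} (hA : A.Nonempty) :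
    coneH (coneS A) = coneH A := by
  ext v
  constructor
  · rintro ⟨t, ht, _, ⟨s, hs, b, hb, rfl⟩, rfl⟩
    exact ⟨t * s, mul_nonneg ht hs.le, b, hb, smul_smul t s b⟩
  · rintro ⟨t, ht, a, ha, rfl⟩
    rcases ht.lt_or_eq with ht | rfl
    · exact ⟨1, zero_le_one, t • a, ⟨t, ht, a, ha, rfl⟩, (one_smul ℝ _).symm⟩
    · obtain ⟨b, hb⟩ := hA
      exact ⟨0, le_rfl, b, ⟨1, one_pos, b, hb, (one_smul ℝ b).symm⟩, by simp⟩

theorem img_hatOp_of_mem_zeros {x : X} (hx : x ∈ zeros T) :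
    img (hatOp T) x = normalCone (Lset T x) x := by
  ext v
  simp only [img, hatOp, Set.mem_ofPred_eq, hx, not_true_eq_false, false_and, and_false,
    or_false, true_and]

theorem img_hatOp_of_notMem_zeros {x : X} (hx : x ∉ zeros T) :
    img (hatOp T) x = coneS (img T x) := by
  ext v
  simp only [img, hatOp, Set.mem_ofPred_eq, hx, false_and, false_or, not_false_eq_true,
    true_and, and_iff_right_iff_imp]
  rintro ⟨t, -, a, ha, -⟩
  exact ⟨a, ha⟩

theorem opDom_hatOp (T : Set (X × StrongDual ℝ X)) : opDom (hatOp T) = opDom T := by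
  ext x
  by_cases hx : x ∈ zeros T
  · refine ⟨fun _ ↦ zeros_subset_opDom hx, fun _ ↦ ⟨0, ?_⟩⟩
    rw [img_hatOp_of_mem_zeros hx]
    exact zero_mem_normalCone _ _
  · simp only [opDom, Set.mem_ofPred_eq, img_hatOp_of_notMem_zeros hx]
    constructor
    · rintro ⟨_, t, -, a, ha, -⟩
      exact ⟨a, ha⟩
    · rintro ⟨a, ha⟩
      exact ⟨a, 1, one_pos, a, ha, (one_smul ℝ a).symm⟩

theorem zeros_hatOp (T : Set (X × StrongDual ℝ X)) : zeros (hatOp T) = zeros T := by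
  ext x
  refine ⟨fun h ↦ ?_, fun hx ↦ Or.inl ⟨hx, zero_mem_normalCone _ _⟩⟩
  by_contra hx
  obtain ⟨t, ht, a, ha, hta⟩ : (0 : StrongDual ℝ X) ∈ coneS (img T x) := by
    rwa [← img_hatOp_of_notMem_zeros hx]
  rw [eq_comm, smul_eq_zero_iff_right ht.ne'] at hta
  subst hta
  exact hx ha

theorem equivOp_hatOp (T : Set (X × StrongDual ℝ X)) : EquivOp T (hatOp T) := by
  refine ⟨(opDom_hatOp T).symm, (zeros_hatOp T).symm, fun x hx ↦ ?_⟩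
  rw [img_hatOp_of_notMem_zeros hx.2, coneH_coneS hx.1]

theorem pseudomonotone_hatOp (hT : Pseudomonotone T) : Pseudomonotone (hatOp T) := by
  rintro p (⟨hpz, hpn⟩ | ⟨-, -, s, hs, a, ha, hpa⟩)
    q (⟨hqz, hqn⟩ | ⟨-, -, t, ht, b, hb, hqb⟩)
  · exact PseudoRel.of_nonpos (hqn p.1 (zeros_subset_Lset _ hpz))
      (hpn q.1 (zeros_subset_Lset _ hqz))
  · rw [← Prod.mk.eta (p := q), hqb]
    exact (hT.mem_pPolar_of_mem_normalCone hpz hpn _ hb).smul_right ht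
  · rw [← Prod.mk.eta (p := p), hpa]
    exact ((hT.mem_pPolar_of_mem_normalCone hqz hqn _ ha).smul_right hs).symm
  · rw [← Prod.mk.eta (p := p), ← Prod.mk.eta (p := q), hpa, hqb]
    exact (hT _ ha _ hb).smul hs ht

theorem Pseudomonotone.subset_hatOp (hS : Pseudomonotone S) : S ⊆ hatOp S := by
  intro p hp
  by_cases hz : p.1 ∈ zeros S
  · exact Or.inl ⟨hz, fun y ⟨y', hy', hpos⟩ ↦ (hS p hp (y, y') hy').apply_nonpos hpos⟩
  · exact Or.inr ⟨⟨p.2, hp⟩, hz, 1, one_pos, p.2, hp, (one_smul ℝ _).symm⟩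

namespace EquivOp

theorem symm (h : EquivOp T S) : EquivOp S T := by
  refine ⟨h.1.symm, h.2.1.symm, fun x hx ↦ (h.2.2 x ?_).symm⟩
  rwa [h.1, h.2.1]

theorem img_subset_coneS (h : EquivOp T S) {x : X} (hx : x ∉ zeros T) :
    img T x ⊆ coneS (img S x) := by
  intro a ha
  have ha₀ : a ≠ 0 := by
    rintro rfl
    exact hx ha
  refine mem_coneS_of_mem_coneH ?_ ha₀
  rw [← h.2.2 x ⟨⟨a, ha⟩, hx⟩]
  exact ⟨1, zero_le_one, a, ha, (one_smul ℝ a).symm⟩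

theorem Lset_subset (h : EquivOp T S) (x : X) : Lset T x ⊆ Lset S x := by
  rintro y ⟨y', hy', hpos⟩
  by_cases hz : y ∈ zeros T
  · exact zeros_subset_Lset x (h.2.1 ▸ hz)
  obtain ⟨t, ht, b, hb, rfl⟩ := h.img_subset_coneS hz hy'
  refine ⟨b, hb, ?_⟩
  rw [smul_apply, smul_eq_mul] at hpos
  exact nonneg_of_mul_nonneg_right (by linarith) ht

theorem hatOp_subset (h : EquivOp T S) : hatOp T ⊆ hatOp S := by
  rintro p (⟨hz, hn⟩ | ⟨hd, hz, hc⟩)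
  · exact Or.inl ⟨h.2.1 ▸ hz, fun y hy ↦ hn y (h.symm.Lset_subset p.1 hy)⟩
  · exact Or.inr ⟨h.1 ▸ hd, h.2.1 ▸ hz, coneS_subset_coneS (h.img_subset_coneS hz) hc⟩

theorem hatOp_eq (h : EquivOp T S) : hatOp T = hatOp S :=
  h.hatOp_subset.antisymm h.symm.hatOp_subset

end EquivOp

theorem Pseudomonotone.insert (hS : Pseudomonotone S) {p : X × StrongDual ℝ X}
    (hp : p ∈ pPolar S) : Pseudomonotone (insert p S) := by
  rintro a (rfl | ha) b (rfl | hb)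
  · exact PseudoRel.refl _
  · exact hp b hb
  · exact (hp a ha).symm
  · exact hS a ha b hb

theorem opDom_insert_of_mem {p : X × StrongDual ℝ X} (hp : p.1 ∈ opDom S) :
    opDom (insert p S) = opDom S := by
  ext x
  refine ⟨fun ⟨v, hv⟩ ↦ ?_, fun ⟨v, hv⟩ ↦ ⟨v, Or.inr hv⟩⟩
  rcases hv with hv | hv
  · rw [← hv] at hp
    exact hp
  · exact ⟨v, hv⟩

theorem Pseudomonotone.subset_restrictOp_pPolar (hS : Pseudomonotone S) :
    S ⊆ restrictOp (pPolar S) (opDom S) :=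
  fun p hp ↦ ⟨fun q hq ↦ hS p hp q hq, ⟨p.2, hp⟩⟩

theorem Pseudomonotone.isMaximalOnDomain_iff (hS : Pseudomonotone S) :
    IsMaximalOnDomain S ↔ S = restrictOp (pPolar S) (opDom S) := by
  constructor
  · refine fun hmax ↦ hS.subset_restrictOp_pPolar.antisymm ?_
    rintro p ⟨hpol, hdom⟩
    rw [← hmax _ (Set.subset_insert p S) (hS.insert hpol) (opDom_insert_of_mem hdom)]
    exact Set.mem_insert p S
  · intro hfix S' hSS' hS' hdom
    refine Set.Subset.antisymm (fun p hp ↦ ?_) hSS'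
    rw [hfix, ← hdom]
    exact ⟨fun q hq ↦ hS' p hp q (hSS' hq), ⟨p.2, hp⟩⟩

end DMaximality

theorem dMax_iff_hat_eq_polar_restricted
    {X : Type*} [NormedAddCommGroup X] [NormedSpace ℝ X]
    (T : Set (X × StrongDual ℝ X)) (hT : Pseudomonotone T) :
    DMaxPseudomonotone T ↔ hatOp T = restrictOp (pPolar (hatOp T)) (opDom T) := by
  constructor
  · rintro ⟨-, S, hTS, hS, hmax⟩
    have hSfix : hatOp S = S := hmax _ hS.subset_hatOp (pseudomonotone_hatOp hS) (opDom_hatOp S)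
    rw [hTS.hatOp_eq, hSfix, hTS.1]
    exact hS.isMaximalOnDomain_iff.1 hmax
  · intro h
    have hhat := pseudomonotone_hatOp hT
    refine ⟨hT, hatOp T, equivOp_hatOp T, hhat, hhat.isMaximalOnDomain_iff.2 ?_⟩
    rwa [opDom_hatOp]
end

section
/- Let T : X ⇉ X* be a pseudomonotone operator. If dom(T) is convex, then (T̂)^ρ_D = T^ρ_D, i.e. the restrictions to dom(T) of the pseudomonotone polars of T̂ and of T coincide. -/
open NormedSpace

/-!
Since `T ⊆ T̂`, polarity gives `T̂^ρ ⊆ T^ρ`. Conversely, let `(x, x*) ∈ T^ρ` with `x ∈ dom T`.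
Pairs `(y, t • y*)` of `T̂` off `Z_T` are related to `(x, x*)` because `∼_p` only sees signs.
For `y ∈ Z_T`, relatedness with `(y, 0)` gives `⟨y - x, x*⟩ ≤ 0`; in the critical case of
equality, the midpoint `z` of `y` and `x` lies in `dom T` by convexity, and relatedness of
`(x, x*)` with `(z, z*)`, `z* ∈ T(z)`, forces `z ∈ L(T, y)`. So every `w ∈ N_{L(T,y)}(y)`
satisfies `⟨z - y, w⟩ ≤ 0`, i.e. `⟨x - y, w⟩ ≤ 0`, which is what `∼_p` requires.
-/

section Polar

variable {X : Type*} [NormedAddCommGroup X] [NormedSpace ℝ X]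

section PseudoRel

variable {p q : X × StrongDual ℝ X}

theorem pseudoRel_comm : PseudoRel p q ↔ PseudoRel q p := by
  unfold PseudoRel
  rw [min_comm, and_comm]

theorem pseudoRel_of_neg (h : p.2 (q.1 - p.1) < 0) : PseudoRel p q :=
  Or.inl (min_lt_iff.2 (Or.inr h))

theorem pseudoRel_of_nonpos_of_eq_zero (hq : q.2 (p.1 - q.1) ≤ 0) (hp : p.2 (q.1 - p.1) = 0) :
    PseudoRel p q := by
  rcases hq.lt_or_eq with hq | hq
  · exact Or.inl (min_lt_iff.2 (Or.inl hq))
  · exact Or.inr ⟨hq, hp⟩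

theorem PseudoRel.nonpos_of_nonneg (h : PseudoRel p q) (hq : 0 ≤ q.2 (p.1 - q.1)) :
    p.2 (q.1 - p.1) ≤ 0 := by
  rcases h with h | ⟨-, h⟩
  · rcases min_lt_iff.1 h with h | h
    · exact absurd h hq.not_gt
    · exact h.le
  · exact h.le

theorem PseudoRel.smul_right_s17 (h : PseudoRel p q) {t : ℝ} (ht : 0 < t) :
    PseudoRel p (q.1, t • q.2) := by
  simp only [PseudoRel, smul_apply, smul_eq_mul, min_lt_iff,
    mul_neg_iff, mul_eq_zero, ht.ne', false_or, ht, ht.not_gt, true_and, false_and,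
    or_false] at h ⊢
  exact h

end PseudoRel

theorem pPolar_anti {S T : Set (X × StrongDual ℝ X)} (h : S ⊆ T) : pPolar T ⊆ pPolar S :=
  fun _ hp q hq => hp q (h hq)

theorem restrictOp_mono {S T : Set (X × StrongDual ℝ X)} (h : S ⊆ T) (A : Set X) :
    restrictOp S A ⊆ restrictOp T A :=
  fun _ hp => ⟨h hp.1, hp.2⟩

theorem Pseudomonotone.subset_hatOp_s17 {T : Set (X × StrongDual ℝ X)} (hT : Pseudomonotone T) :
    T ⊆ hatOp T := by
  rintro ⟨y, y'⟩ hy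
  by_cases hz : y ∈ zeros T
  · exact Or.inl ⟨hz, fun z ⟨z', hz', hzy⟩ => (hT _ hy _ hz').nonpos_of_nonneg hzy⟩
  · exact Or.inr ⟨⟨y', hy⟩, hz, 1, one_pos, y', hy, (one_smul _ _).symm⟩

section Zeros

variable {T : Set (X × StrongDual ℝ X)} {p : X × StrongDual ℝ X} {y : X}

theorem nonpos_of_mem_pPolar_of_mem_zeros (hp : p ∈ pPolar T) (hy : y ∈ zeros T) :
    p.2 (y - p.1) ≤ 0 :=
  (hp (y, 0) hy).nonpos_of_nonneg le_rfl

theorem midpoint_mem_Lset_of_mem_pPolar (hp : p ∈ pPolar T) (hpy : p.2 (y - p.1) = 0)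
    (hz : midpoint ℝ y p.1 ∈ opDom T) : midpoint ℝ y p.1 ∈ Lset T y := by
  obtain ⟨z', hz'⟩ := hz
  have hpz : p.2 (midpoint ℝ y p.1 - p.1) = 0 := by
    rw [midpoint_sub_right, map_smul, hpy, smul_zero]
  have hz'x : z' (p.1 - midpoint ℝ y p.1) ≤ 0 :=
    (pseudoRel_comm.1 (hp _ hz')).nonpos_of_nonneg hpz.ge
  refine ⟨z', hz', ?_⟩
  -- at the midpoint `z`, `y - z = -(x - z)`
  rw [left_sub_midpoint, ← neg_sub p.1 y, smul_neg, ← right_sub_midpoint, map_neg]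
  exact neg_nonneg.2 hz'x

theorem pseudoRel_of_mem_pPolar_of_mem_zeros (hconv : Convex ℝ (opDom T)) (hp : p ∈ pPolar T)
    (hpT : p.1 ∈ opDom T) (hy : y ∈ zeros T) {w : StrongDual ℝ X}
    (hw : w ∈ normalCone (Lset T y) y) : PseudoRel p (y, w) := by
  rcases (nonpos_of_mem_pPolar_of_mem_zeros hp hy).lt_or_eq with hpy | hpy
  · exact pseudoRel_of_neg hpy
  have hzL := midpoint_mem_Lset_of_mem_pPolar hp hpy (hconv.midpoint_mem ⟨0, hy⟩ hpT)
  have hwz := hw _ hzL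
  rw [midpoint_sub_left, map_smul, smul_eq_mul] at hwz
  exact pseudoRel_of_nonpos_of_eq_zero
    (nonpos_of_mul_nonpos_right hwz (invOf_pos.2 two_pos)) hpy

end Zeros

end Polar

theorem hat_polar_restricted_eq_of_convex_dom
    {X : Type*} [NormedAddCommGroup X] [NormedSpace ℝ X]
    (T : Set (X × StrongDual ℝ X)) (hT : Pseudomonotone T) (hconv : Convex ℝ (opDom T)) :
    restrictOp (pPolar (hatOp T)) (opDom T) = restrictOp (pPolar T) (opDom T) := by
  refine (restrictOp_mono (pPolar_anti hT.subset_hatOp_s17) _).antisymm ?_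
  rintro p ⟨hp, hpT⟩
  refine ⟨?_, hpT⟩
  rintro ⟨y, w⟩ (⟨hy, hw⟩ | ⟨-, -, t, ht, y', hy', rfl⟩)
  · exact pseudoRel_of_mem_pPolar_of_mem_zeros hconv hp hpT hy hw
  · exact (hp (y, y') hy').smul_right_s17 ht
end
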